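/- arXiv:2210.09065 — 7 statements merged into one kernel-verified Lean document; each statement's English description precedes it below -/
import Mathlib

section
/- Let n be a positive integer and let ρ, σ ∈ M_n(ℂ) be Hermitian idempotents (ρ* = ρ, ρ² = ρ, σ* = σ, σ² = σ) with ρσ = σρ, and set τ := ρσ. Assume Tr(τ) = 1. Then for all matrices α, γ ∈ M_n(ℂ) such that ασ = σα and γρ = ργ, one has Tr(τ · α · γ) = Tr(τ · α) · Tr(τ · γ). -/
/-!
`τ = ρσ` is an idempotent of trace one, hence of rank one, so every corner `τ X τ` is a scalar
multiple of `τ`, namely `Tr(τ X) • τ`. The commutation relations let one insert a second `τ`: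
`Tr(τ α γ) = Tr(τ α ρ γ) = Tr(τ α τ γ) = Tr(τ α) Tr(τ γ)`.
-/

open Matrix

open Module LinearMap in
theorem Module.End.exists_mul_mul_eq_smul_of_finrank_range_eq_one {K V : Type*} [Field K]
    [AddCommGroup V] [Module K V] {e : End K V} (he : finrank K (range e) = 1) (X : End K V) :
    ∃ c : K, e * X * e = c • e := by
  obtain ⟨u, -, hu⟩ := finrank_eq_one_iff'.1 he
  obtain ⟨c, hc⟩ := hu ⟨e (X u), mem_range_self e _⟩
  refine ⟨c, LinearMap.ext fun y => ?_⟩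
  obtain ⟨a, ha⟩ := hu ⟨e y, mem_range_self e y⟩
  have hc' : c • (u : V) = e (X u) := congrArg Subtype.val hc
  have ha' : a • (u : V) = e y := congrArg Subtype.val ha
  calc e (X (e y)) = a • e (X u) := by rw [← ha', map_smul, map_smul]
    _ = c • e y := by rw [← hc', ← ha', smul_comm]

open Module LinearMap in
theorem IsIdempotentElem.finrank_range_eq_one {K V : Type*} [Field K] [CharZero K]
    [AddCommGroup V] [Module K V] [FiniteDimensional K V] {e : End K V}
    (he : IsIdempotentElem e) (htr : trace K V e = 1) : finrank K (range e) = 1 := by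
  rwa [he.isProj_range.trace, Nat.cast_eq_one] at htr

theorem Matrix.mul_mul_self_eq_trace_mul_smul {ι K : Type*} [Field K] [CharZero K] [Fintype ι]
    [DecidableEq ι] {P : Matrix ι ι K} (hP : IsIdempotentElem P) (htr : P.trace = 1)
    (X : Matrix ι ι K) : P * X * P = (P * X).trace • P := by
  have hPlin := hP.map (toLinAlgEquiv' (R := K) (n := ι))
  obtain ⟨c, hc⟩ := Module.End.exists_mul_mul_eq_smul_of_finrank_range_eq_one
    (hPlin.finrank_range_eq_one ((trace_toLin'_eq P).trans htr)) (toLinAlgEquiv' X)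
  have hc : P * X * P = c • P := toLinAlgEquiv'.injective (by simpa using hc)
  have hcX : (P * X).trace = c := by
    calc (P * X).trace = (P * X * P).trace := by rw [trace_mul_cycle, hP.eq]
      _ = c := by rw [hc, trace_smul, htr, smul_eq_mul, mul_one]
  rw [hc, hcX]

theorem stmt0_general (n : ℕ) (ρ σ : Matrix (Fin n) (Fin n) ℂ)
    (hρ2 : ρ * ρ = ρ) (hσ2 : σ * σ = σ)
    (hcomm : ρ * σ = σ * ρ) (htr : (ρ * σ).trace = 1) :
    ∀ α γ : Matrix (Fin n) (Fin n) ℂ, α * σ = σ * α → γ * ρ = ρ * γ →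
      (ρ * σ * α * γ).trace = (ρ * σ * α).trace * (ρ * σ * γ).trace := by
  intro α γ hα hγ
  have hτ : IsIdempotentElem (ρ * σ) := IsIdempotentElem.mul_of_commute hcomm hρ2 hσ2
  have hsandwich : ρ * σ * α * (ρ * σ) = ρ * σ * α * ρ := by
    calc ρ * σ * α * (ρ * σ) = ρ * σ * α * (σ * ρ) := congrArg (ρ * σ * α * ·) hcomm
      _ = ρ * (σ * (α * σ)) * ρ := by simp only [mul_assoc]
      _ = ρ * σ * α * ρ := by rw [hα, ← mul_assoc σ, hσ2]; simp only [mul_assoc]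
  calc (ρ * σ * α * γ).trace = (ρ * (ρ * σ * α * γ)).trace := by simp only [← mul_assoc, hρ2]
    _ = (ρ * σ * α * ρ * γ).trace := by rw [trace_mul_comm, mul_assoc _ γ, hγ, ← mul_assoc]
    _ = (ρ * σ * α).trace * (ρ * σ * γ).trace := by
      rw [← hsandwich, mul_mul_self_eq_trace_mul_smul hτ htr, smul_mul_assoc, trace_smul,
        smul_eq_mul]

/-- Trace factorisation in a pure-state commutator bilocal quantum model:
for commuting Hermitian idempotents `ρ`, `σ` with `Tr(ρσ) = 1`, and matrices `α`
commuting with `σ` and `γ` commuting with `ρ`, the trace of `ρσ·α·γ` factorises. -/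
theorem stmt0 (n : ℕ) (hn : 0 < n) (ρ σ : Matrix (Fin n) (Fin n) ℂ)
    (hρH : ρᴴ = ρ) (hρ2 : ρ * ρ = ρ) (hσH : σᴴ = σ) (hσ2 : σ * σ = σ)
    (hcomm : ρ * σ = σ * ρ) (htr : (ρ * σ).trace = 1) :
    ∀ α γ : Matrix (Fin n) (Fin n) ℂ, α * σ = σ * α → γ * ρ = ρ * γ →
      (ρ * σ * α * γ).trace = (ρ * σ * α).trace * (ρ * σ * γ).trace :=
  stmt0_general n ρ σ hρ2 hσ2 hcomm htr
end

section
/- Let H be a complex Hilbert space (a complete complex inner product space), let v₀ ∈ H be a unit vector, and let V and W be complete subspaces of H with v₀ ∈ V and v₀ ∈ W. Assume that every vector u ∈ V orthogonal to v₀ is orthogonal to every vector w ∈ W orthogonal to v₀ (i.e., for all u ∈ V and w ∈ W, ⟨u, v₀⟩ = 0 and ⟨w, v₀⟩ = 0 imply ⟨u, w⟩ = 0). Let P_V and P_W denote the orthogonal projections of H onto V and W, and P₀ the orthogonal projection onto the one-dimensional span of v₀. Then P_V ∘ P_W = P_W ∘ P_V = P₀. -/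
open Submodule

/-!
Write `K = ℂ ∙ v₀`. Since `K ≤ V`, the space `V` splits orthogonally as `K ⊔ (Kᗮ ⊓ V)`, and the
hypothesis says that `Kᗮ ⊓ W` is orthogonal to both summands, hence to `V`. So `P_V` kills the
component `P_W x - P_K x ∈ Kᗮ ⊓ W` of `P_W x` and fixes the component `P_K x ∈ V`, which gives
`P_V P_W = P_K`; the other order follows by symmetry.
-/

namespace Submodule

variable {𝕜 E : Type*} [RCLike 𝕜] [NormedAddCommGroup E] [InnerProductSpace 𝕜 E]
  {K V W : Submodule 𝕜 E} [K.HasOrthogonalProjection]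

theorem orthogonal_inf_le_orthogonal_of_isOrtho (hKV : K ≤ V) (h : Kᗮ ⊓ V ⟂ Kᗮ ⊓ W) :
    Kᗮ ⊓ W ≤ Vᗮ := by
  rw [← isOrtho_iff_le, ← sup_orthogonal_inf_of_hasOrthogonalProjection hKV, isOrtho_sup_right]
  exact ⟨(isOrtho_orthogonal_left K).mono_left inf_le_left, h.symm⟩

theorem starProjection_comp_starProjection_eq_of_isOrtho [V.HasOrthogonalProjection]
    [W.HasOrthogonalProjection] (hKV : K ≤ V) (hKW : K ≤ W) (h : Kᗮ ⊓ V ⟂ Kᗮ ⊓ W) :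
    V.starProjection ∘L W.starProjection = K.starProjection := by
  ext x
  have hK : K.starProjection (W.starProjection x) = K.starProjection x := by
    rw [← ContinuousLinearMap.comp_apply, starProjection_comp_starProjection_of_le hKW]
  have hrest : W.starProjection x - K.starProjection x ∈ Vᗮ := by
    refine orthogonal_inf_le_orthogonal_of_isOrtho hKV h (mem_inf.mpr ⟨?_, ?_⟩)
    · simpa only [hK] using sub_starProjection_mem_orthogonal (K := K) (W.starProjection x)
    · exact W.sub_mem (starProjection_apply_mem W x) (hKW (starProjection_apply_mem K x))
  calc V.starProjection (W.starProjection x)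
      = V.starProjection (K.starProjection x)
          + V.starProjection (W.starProjection x - K.starProjection x) := by
        rw [← map_add, add_sub_cancel]
    _ = K.starProjection x := by
        rw [starProjection_eq_self_iff.mpr (hKV (starProjection_apply_mem K x)),
          (starProjection_apply_eq_zero_iff (K := V)).mpr hrest, add_zero]

end Submodule

theorem stmt5_general {H : Type*} [NormedAddCommGroup H] [InnerProductSpace ℂ H]
    (v₀ : H) (V W : Submodule ℂ H) [CompleteSpace V] [CompleteSpace W]
    (hVmem : v₀ ∈ V) (hWmem : v₀ ∈ W)
    (horth : ∀ u ∈ V, ∀ w ∈ W, inner ℂ u v₀ = (0 : ℂ) → inner ℂ w v₀ = (0 : ℂ) →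
      inner ℂ u w = (0 : ℂ)) :
    (V.subtypeL.comp (orthogonalProjection V)).comp
        (W.subtypeL.comp (orthogonalProjection W)) =
      (ℂ ∙ v₀).subtypeL.comp (orthogonalProjection (ℂ ∙ v₀)) ∧
    (W.subtypeL.comp (orthogonalProjection W)).comp
        (V.subtypeL.comp (orthogonalProjection V)) =
      (ℂ ∙ v₀).subtypeL.comp (orthogonalProjection (ℂ ∙ v₀)) := by
  have hKV : ℂ ∙ v₀ ≤ V := (span_singleton_le_iff_mem v₀ V).mpr hVmem
  have hKW : ℂ ∙ v₀ ≤ W := (span_singleton_le_iff_mem v₀ W).mpr hWmem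
  have hVW : (ℂ ∙ v₀)ᗮ ⊓ V ⟂ (ℂ ∙ v₀)ᗮ ⊓ W := by
    rw [isOrtho_iff_inner_eq]
    rintro u ⟨hu₀, hu⟩ w ⟨hw₀, hw⟩
    exact horth u hu w hw (mem_orthogonal_singleton_iff_inner_left.mp hu₀)
      (mem_orthogonal_singleton_iff_inner_left.mp hw₀)
  exact ⟨starProjection_comp_starProjection_eq_of_isOrtho hKV hKW hVW,
    starProjection_comp_starProjection_eq_of_isOrtho hKW hKV hVW.symm⟩

/-- If `V`, `W` are complete subspaces of a Hilbert space, both containing the unit vector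
`v₀`, such that the orthogonal complements of `v₀` inside `V` and inside `W` are mutually
orthogonal, then the orthogonal projections onto `V` and `W` commute and their product is
the orthogonal projection onto the span of `v₀`. -/
theorem stmt5 {H : Type*} [NormedAddCommGroup H] [InnerProductSpace ℂ H] [CompleteSpace H]
    (v₀ : H) (hv₀ : ‖v₀‖ = 1) (V W : Submodule ℂ H) [CompleteSpace V] [CompleteSpace W]
    (hVmem : v₀ ∈ V) (hWmem : v₀ ∈ W)
    (horth : ∀ u ∈ V, ∀ w ∈ W, inner ℂ u v₀ = (0 : ℂ) → inner ℂ w v₀ = (0 : ℂ) →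
      inner ℂ u w = (0 : ℂ)) :
    (V.subtypeL.comp (orthogonalProjection V)).comp
        (W.subtypeL.comp (orthogonalProjection W)) =
      (ℂ ∙ v₀).subtypeL.comp (orthogonalProjection (ℂ ∙ v₀)) ∧
    (W.subtypeL.comp (orthogonalProjection W)).comp
        (V.subtypeL.comp (orthogonalProjection V)) =
      (ℂ ∙ v₀).subtypeL.comp (orthogonalProjection (ℂ ∙ v₀)) :=
  stmt5_general v₀ V W hVmem hWmem horth
end

section
/- There exist a positive integer n and matrices in M_n(ℂ) forming a mixed-state commutator bilocal quantum model realising the shared random bit distribution: positive semidefinite matrices ρ, σ ∈ M_n(ℂ) with ρσ = σρ and, setting τ := ρσ, Tr(τ) = 1; PVMs (A_a)_{a∈{0,1}}, (B_b)_{b∈{0,1}}, (C_c)_{c∈{0,1}} (Hermitian idempotents with A₀ + A₁ = B₀ + B₁ = C₀ + C₁ = 1) such that every A_a commutes with every B_b and every C_c, every B_b commutes with every C_c, and A_a σ = σ A_a, ρ C_c = C_c ρ for all a, c; and Tr(τ · A_a · B_b · C_c) = 1/2 if a = b = c and 0 otherwise. -/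
open Matrix
open scoped ComplexOrder

namespace Stmt7Aux

noncomputable def r : ℂ := ((Real.sqrt 2)⁻¹ : ℝ)

noncomputable def P (a : Fin 2) : Matrix (Fin 2) (Fin 2) ℂ :=
  diagonal (fun i => if i = a then 1 else 0)

lemma hsq : (Real.sqrt 2 : ℂ) * (Real.sqrt 2 : ℂ) = 2 := by
  exact_mod_cast congrArg (Complex.ofReal) (Real.mul_self_sqrt (by norm_num : (0:ℝ) ≤ 2))

lemma h2 : (Real.sqrt 2 : ℂ) ≠ 0 := by
  simpa using (Real.sqrt_ne_zero').mpr (by norm_num)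

lemma rr : r * r = 1 / 2 := by
  unfold r
  push_cast
  field_simp
  linear_combination -hsq

lemma P_herm (a : Fin 2) : (P a)ᴴ = P a := by
  unfold P
  rw [diagonal_conjTranspose]
  exact congrArg diagonal (funext fun i => by by_cases h : i = a <;> simp [h])

lemma P_idem (a : Fin 2) : P a * P a = P a := by
  unfold P
  rw [diagonal_mul_diagonal]
  exact congrArg diagonal (funext fun i => by by_cases h : i = a <;> simp [h])

lemma P_sum : P 0 + P 1 = 1 := by
  unfold P
  rw [diagonal_add, ← diagonal_one]
  exact congrArg diagonal (funext fun i => by fin_cases i <;> simp)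

lemma P_comm (a b : Fin 2) : P a * P b = P b * P a := by
  unfold P
  rw [diagonal_mul_diagonal, diagonal_mul_diagonal]
  exact congrArg diagonal (funext fun i => mul_comm _ _)

lemma rho_psd : (diagonal (fun _ : Fin 2 => r)).PosSemidef := by
  have : (fun _ : Fin 2 => r) = RCLike.ofReal ∘ (fun _ => (Real.sqrt 2)⁻¹) := by
    funext i; rfl
  rw [this]
  exact posSemidef_diagonal_iff.mpr fun i => by
    simp only [Function.comp_apply]
    rw [Complex.le_def]
    constructor <;> simp
    positivity

end Stmt7Aux

open Stmt7Aux

/-- There exists a mixed-state commutator bilocal quantum model (with positive semidefinite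
commuting sources `ρ`, `σ`, `Tr(ρσ) = 1`, and pairwise commuting binary PVMs obeying the
bilocal commutation constraints) realising the shared random bit distribution. -/
theorem stmt7 : ∃ (n : ℕ), 0 < n ∧
    ∃ (ρ σ : Matrix (Fin n) (Fin n) ℂ) (A B C : Fin 2 → Matrix (Fin n) (Fin n) ℂ),
      ρ.PosSemidef ∧ σ.PosSemidef ∧ ρ * σ = σ * ρ ∧ (ρ * σ).trace = 1 ∧
      (∀ a, (A a)ᴴ = A a ∧ A a * A a = A a) ∧ A 0 + A 1 = 1 ∧
      (∀ b, (B b)ᴴ = B b ∧ B b * B b = B b) ∧ B 0 + B 1 = 1 ∧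
      (∀ c, (C c)ᴴ = C c ∧ C c * C c = C c) ∧ C 0 + C 1 = 1 ∧
      (∀ a b, A a * B b = B b * A a) ∧
      (∀ a c, A a * C c = C c * A a) ∧
      (∀ b c, B b * C c = C c * B b) ∧
      (∀ a, A a * σ = σ * A a) ∧
      (∀ c, ρ * C c = C c * ρ) ∧
      (∀ a b c, (ρ * σ * (A a * B b * C c)).trace =
        if a = b ∧ b = c then (1/2 : ℂ) else 0) := by
  refine ⟨2, by norm_num, diagonal (fun _ => r), diagonal (fun _ => r), P, P, P,
    rho_psd, rho_psd, rfl, ?_, fun a => ⟨P_herm a, P_idem a⟩, P_sum,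
    fun b => ⟨P_herm b, P_idem b⟩, P_sum, fun c => ⟨P_herm c, P_idem c⟩, P_sum,
    P_comm, P_comm, P_comm, ?_, ?_, ?_⟩
  · rw [diagonal_mul_diagonal, trace_diagonal, Fin.sum_univ_two, rr]
    norm_num
  · intro a
    unfold P
    rw [diagonal_mul_diagonal, diagonal_mul_diagonal]
    exact congrArg diagonal (funext fun i => mul_comm _ _)
  · intro c
    unfold P
    rw [diagonal_mul_diagonal, diagonal_mul_diagonal]
    exact congrArg diagonal (funext fun i => mul_comm _ _)
  · intro a b c
    unfold P
    simp only [diagonal_mul_diagonal, trace_diagonal, Fin.sum_univ_two]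
    have := rr
    fin_cases a <;> fin_cases b <;> fin_cases c <;>
      simp_all [Fin.ext_iff] <;> linarith
end

section
/- For every positive integer n, there is no pure-state commutator bilocal quantum model in M_n(ℂ) realising the shared random bit distribution. That is, there do not exist Hermitian idempotents ρ, σ ∈ M_n(ℂ) with ρσ = σρ and Tr(ρσ) = 1, together with PVMs (A_a)_{a∈{0,1}}, (B_b)_{b∈{0,1}}, (C_c)__{c∈{0,1}} in M_n(ℂ) such that every A_a commutes with every B_b and every C_c, every B_b commutes with every C_c, A_a σ = σ A_a and ρ C_c = C_c ρ for all a, c, and Tr(ρσ · A_a · B_b · C_c) = 1/2 if a = b = c and 0 otherwise. -/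
open Matrix

/-!
The product `τ = ρσ` of the two commuting source projectors is an idempotent of trace one, hence
of rank one, so `τ X τ = Tr(τ X) • τ` for every `X`. Moving `σ` past `A` and `ρ` past `C` inside
the trace turns `Tr(τ A C)` into `Tr(τ A τ C) = Tr(τ A) Tr(τ C)`. For the shared random bit the
left side is `1/2` while both marginals are `1/2`, and `1/2 ≠ 1/4`.
-/

theorem LinearMap.mul_mul_eq_trace_smul_of_isIdempotentElem {K V : Type*} [Field K] [CharZero K]
    [AddCommGroup V] [Module K V] [FiniteDimensional K V] {e : V →ₗ[K] V}
    (he : IsIdempotentElem e) (htr : trace K V e = 1) (f : V →ₗ[K] V) :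
    e * f * e = trace K V (e * f) • e := by
  have hrank : Module.finrank K (range e) ≤ 1 := by
    rw [(IsIdempotentElem.isProj_range e he).trace, Nat.cast_eq_one] at htr
    exact htr.le
  obtain ⟨u, hu⟩ := finrank_le_one_iff.mp hrank
  -- `range e` is spanned by `u`, and `e * f` acts on it as the scalar `c`.
  have hline : ∀ x, ∃ c : K, c • (u : V) = e x := fun x => by
    obtain ⟨c, hc⟩ := hu ⟨e x, mem_range_self e x⟩
    exact ⟨c, congrArg Subtype.val hc⟩
  obtain ⟨c, hc⟩ := hline (f u)
  have hscalar : e * f * e = c • e := by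
    ext x
    obtain ⟨d, hd⟩ := hline x
    simp only [Module.End.mul_apply, smul_apply, ← hd, map_smul, ← hc, smul_comm c d]
  have htrace : trace K V (e * f * e) = trace K V (e * f) := by
    rw [trace_mul_comm, ← mul_assoc, he.eq]
  rw [hscalar, map_smul, htr, smul_eq_mul, mul_one] at htrace
  rw [hscalar, htrace]

theorem Matrix.mul_mul_eq_trace_smul_of_isIdempotentElem {K m : Type*} [Field K] [CharZero K]
    [Fintype m] [DecidableEq m] {P : Matrix m m K} (hP : IsIdempotentElem P) (htr : P.trace = 1)
    (X : Matrix m m K) : P * X * P = (P * X).trace • P := by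
  have htoLin_trace (Y : Matrix m m K) : LinearMap.trace K _ (toLinAlgEquiv' Y) = Y.trace :=
    trace_toLin'_eq Y
  apply toLinAlgEquiv'.injective
  rw [map_mul, map_mul, map_smul, ← htoLin_trace, map_mul,
    LinearMap.mul_mul_eq_trace_smul_of_isIdempotentElem (hP.map _) ((htoLin_trace P).trans htr)]

theorem Matrix.trace_mul_mul_eq_trace_mul_mul_trace_mul {K m : Type*} [Field K] [CharZero K]
    [Fintype m] [DecidableEq m] {ρ σ A C : Matrix m m K} (hρ : IsIdempotentElem ρ)
    (hσ : IsIdempotentElem σ) (hρσ : Commute ρ σ) (htr : (ρ * σ).trace = 1)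
    (hA : Commute A σ) (hC : Commute ρ C) :
    (ρ * σ * (A * C)).trace = (ρ * σ * A).trace * (ρ * σ * C).trace := by
  calc (ρ * σ * (A * C)).trace
      = (σ * σ * (A * C) * (ρ * ρ)).trace := by
        rw [hρ.eq, hσ.eq, mul_assoc, trace_mul_comm, mul_assoc]
    _ = (σ * (A * σ) * (ρ * C) * ρ).trace := by
        rw [hA.eq, hC.eq]; simp only [mul_assoc]
    _ = (ρ * σ * A * (σ * ρ) * C).trace := by
        rw [trace_mul_comm]; simp only [mul_assoc]
    _ = (ρ * σ * A * (ρ * σ) * C).trace := by rw [← hρσ.eq]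
    _ = (ρ * σ * A).trace * (ρ * σ * C).trace := by
        rw [mul_mul_eq_trace_smul_of_isIdempotentElem (hρ.mul_of_commute hρσ hσ) htr,
          smul_mul_assoc, trace_smul, smul_eq_mul]

theorem stmt8_general (n : ℕ) :
    ¬ ∃ (ρ σ : Matrix (Fin n) (Fin n) ℂ) (A B C : Fin 2 → Matrix (Fin n) (Fin n) ℂ),
      ρᴴ = ρ ∧ ρ * ρ = ρ ∧ σᴴ = σ ∧ σ * σ = σ ∧ ρ * σ = σ * ρ ∧ (ρ * σ).trace = 1 ∧
      (∀ a, (A a)ᴴ = A a ∧ A a * A a = A a) ∧ A 0 + A 1 = 1 ∧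
      (∀ b, (B b)ᴴ = B b ∧ B b * B b = B b) ∧ B 0 + B 1 = 1 ∧
      (∀ c, (C c)ᴴ = C c ∧ C c * C c = C c) ∧ C 0 + C 1 = 1 ∧
      (∀ a b, A a * B b = B b * A a) ∧
      (∀ a c, A a * C c = C c * A a) ∧
      (∀ b c, B b * C c = C c * B b) ∧
      (∀ a, A a * σ = σ * A a) ∧
      (∀ c, ρ * C c = C c * ρ) ∧
      (∀ a b c, (ρ * σ * (A a * B b * C c)).trace =
        if a = b ∧ b = c then (1/2 : ℂ) else 0) := by
  rintro ⟨ρ, σ, A, B, C, -, hρ, -, hσ, hρσ, htr, -, hA, -, hB, -, hC, -, -, -, hAσ, hρC, hp⟩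
  have hAC (a c : Fin 2) : (ρ * σ * (A a * C c)).trace = if a = c then 1/2 else 0 := by
    rw [← mul_one (A a), ← hB]
    fin_cases a <;> fin_cases c <;> simp [mul_add, add_mul, hp]
  have hA0 : (ρ * σ * A 0).trace = 1/2 := by
    rw [← mul_one (A 0), ← hC, mul_add, mul_add, trace_add, hAC, hAC]; norm_num
  have hC0 : (ρ * σ * C 0).trace = 1/2 := by
    rw [← one_mul (C 0), ← hA, add_mul, mul_add, trace_add, hAC, hAC]; norm_num
  have hfactor := trace_mul_mul_eq_trace_mul_mul_trace_mul hρ hσ hρσ htr (hAσ 0) (hρC 0)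
  rw [hAC, hA0, hC0] at hfactor
  norm_num at hfactor

/-- For every `n`, there is no pure-state commutator bilocal quantum model in `M_n(ℂ)`
(commuting Hermitian idempotent sources `ρ`, `σ` with `Tr(ρσ) = 1`, pairwise commuting
binary PVMs with the bilocal commutation constraints) realising the shared random bit. -/
theorem stmt8 (n : ℕ) (hn : 0 < n) :
    ¬ ∃ (ρ σ : Matrix (Fin n) (Fin n) ℂ) (A B C : Fin 2 → Matrix (Fin n) (Fin n) ℂ),
      ρᴴ = ρ ∧ ρ * ρ = ρ ∧ σᴴ = σ ∧ σ * σ = σ ∧ ρ * σ = σ * ρ ∧ (ρ * σ).trace = 1 ∧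
      (∀ a, (A a)ᴴ = A a ∧ A a * A a = A a) ∧ A 0 + A 1 = 1 ∧
      (∀ b, (B b)ᴴ = B b ∧ B b * B b = B b) ∧ B 0 + B 1 = 1 ∧
      (∀ c, (C c)ᴴ = C c ∧ C c * C c = C c) ∧ C 0 + C 1 = 1 ∧
      (∀ a b, A a * B b = B b * A a) ∧
      (∀ a c, A a * C c = C c * A a) ∧
      (∀ b c, B b * C c = C c * B b) ∧
      (∀ a, A a * σ = σ * A a) ∧
      (∀ c, ρ * C c = C c * ρ) ∧
      (∀ a b c, (ρ * σ * (A a * B b * C c)).trace =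
        if a = b ∧ b = c then (1/2 : ℂ) else 0) :=
  stmt8_general n
end

section
/- For all positive integers d_A, d_L, d_R, d_C, there do not exist: a positive semidefinite complex matrix ρ indexed by Fin d_A × Fin d_L with Tr(ρ) = 1, a positive semidefinite complex matrix σ indexed by Fin d_R × Fin d_C with Tr(σ) = 1, and PVMs (A_a)_{a∈{0,1}} on Fin d_A, (B_b)_{b∈{0,1}} on Fin d_L × Fin d_R, (C_c)_{c∈{0,1}} on Fin d_C (each a pair of Hermitian idempotents summing to the identity), such that for all a, b, c: Tr((ρ ⊗ σ) · (A_a ⊗ B_b ⊗ C_c)) = 1/2 if a = b = c and 0 otherwise (Kronecker products reindexed along the canonical equivalence of (Fin d_A × Fin d_L) × (Fin d_R × Fin d_C) with Fin d_A × ((Fin d_L × Fin d_R) × Fin d_C)). -/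
open Matrix Kronecker
open scoped ComplexOrder

/-- The canonical equivalence `Fin dA × ((Fin dL × Fin dR) × Fin dC) ≃
(Fin dA × Fin dL) × (Fin dR × Fin dC)`. -/
def bilocAssocEquiv (dA dL dR dC : ℕ) :
    (Fin dA × (Fin dL × Fin dR) × Fin dC) ≃ ((Fin dA × Fin dL) × Fin dR × Fin dC) :=
  (Equiv.prodAssoc (Fin dA) (Fin dL × Fin dR) (Fin dC)).symm.trans
    ((((Equiv.prodAssoc (Fin dA) (Fin dL) (Fin dR)).symm.prodCongr
        (Equiv.refl (Fin dC))).trans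
      (Equiv.prodAssoc (Fin dA × Fin dL) (Fin dR) (Fin dC))))

lemma biloc_key (dA dL dR dC : ℕ) (A : Matrix (Fin dA) (Fin dA) ℂ)
    (C : Matrix (Fin dC) (Fin dC) ℂ) :
    Matrix.reindex (bilocAssocEquiv dA dL dR dC) (bilocAssocEquiv dA dL dR dC)
      (A ⊗ₖ ((1 : Matrix (Fin dL × Fin dR) (Fin dL × Fin dR) ℂ) ⊗ₖ C)) =
    (A ⊗ₖ (1 : Matrix (Fin dL) (Fin dL) ℂ)) ⊗ₖ
      ((1 : Matrix (Fin dR) (Fin dR) ℂ) ⊗ₖ C) := by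
  ext ⟨⟨a, l⟩, ⟨r, c⟩⟩ ⟨⟨a', l'⟩, ⟨r', c'⟩⟩
  simp only [Matrix.reindex_apply, Matrix.submatrix_apply, bilocAssocEquiv,
    Equiv.trans_apply, Equiv.symm_trans_apply, Equiv.prodAssoc_apply,
    Equiv.prodAssoc_symm_apply, Equiv.symm_symm, Equiv.prodCongr_symm,
    Equiv.refl_symm, Equiv.prodCongr_apply, Equiv.coe_refl, Prod.map,
    Matrix.kroneckerMap_apply, Matrix.one_apply, Prod.mk.injEq, id_eq]
  by_cases h : l = l' <;> by_cases h' : r = r' <;> simp [h, h'] <;> ring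

/-- The shared random bit distribution is not a (finite-dimensional) Tensor Bilocal Quantum
Distribution: no states `ρ`, `σ` and binary PVMs `A`, `B`, `C` realise it in tensor form. -/
theorem stmt10 (dA dL dR dC : ℕ)
    (hdA : 0 < dA) (hdL : 0 < dL) (hdR : 0 < dR) (hdC : 0 < dC) :
    ¬ ∃ (ρ : Matrix (Fin dA × Fin dL) (Fin dA × Fin dL) ℂ)
        (σ : Matrix (Fin dR × Fin dC) (Fin dR × Fin dC) ℂ)
        (A : Fin 2 → Matrix (Fin dA) (Fin dA) ℂ)
        (B : Fin 2 → Matrix (Fin dL × Fin dR) (Fin dL × Fin dR) ℂ)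
        (C : Fin 2 → Matrix (Fin dC) (Fin dC) ℂ),
      ρ.PosSemidef ∧ ρ.trace = 1 ∧ σ.PosSemidef ∧ σ.trace = 1 ∧
      (∀ a, (A a)ᴴ = A a ∧ A a * A a = A a) ∧ A 0 + A 1 = 1 ∧
      (∀ b, (B b)ᴴ = B b ∧ B b * B b = B b) ∧ B 0 + B 1 = 1 ∧
      (∀ c, (C c)ᴴ = C c ∧ C c * C c = C c) ∧ C 0 + C 1 = 1 ∧
      (∀ a b c, ((ρ ⊗ₖ σ) *
          Matrix.reindex (bilocAssocEquiv dA dL dR dC) (bilocAssocEquiv dA dL dR dC)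
            (A a ⊗ₖ (B b ⊗ₖ C c))).trace =
        if a = b ∧ b = c then (1/2 : ℂ) else 0) := by
  rintro ⟨ρ, σ, A, B, C, hρ, hρt, hσ, hσt, hA, hAsum, hB, hBsum, hC, hCsum, h⟩
  set f : Fin 2 → ℂ := fun a => (ρ * (A a ⊗ₖ (1 : Matrix (Fin dL) (Fin dL) ℂ))).trace with hf
  set g : Fin 2 → ℂ := fun c => (σ * ((1 : Matrix (Fin dR) (Fin dR) ℂ) ⊗ₖ C c)).trace with hg
  have hfg : ∀ a c : Fin 2, f a * g c =
      (if a = 0 ∧ (0 : Fin 2) = c then (1/2 : ℂ) else 0) +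
      (if a = 1 ∧ (1 : Fin 2) = c then (1/2 : ℂ) else 0) := by
    intro a c
    have e1 : f a * g c =
        ((ρ ⊗ₖ σ) * Matrix.reindex (bilocAssocEquiv dA dL dR dC) (bilocAssocEquiv dA dL dR dC)
          (A a ⊗ₖ ((1 : Matrix (Fin dL × Fin dR) (Fin dL × Fin dR) ℂ) ⊗ₖ C c))).trace := by
      rw [biloc_key, ← Matrix.mul_kronecker_mul, Matrix.trace_kronecker]
    rw [e1, ← hBsum, add_kronecker, kronecker_add]
    rw [show Matrix.reindex (bilocAssocEquiv dA dL dR dC) (bilocAssocEquiv dA dL dR dC)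
        (A a ⊗ₖ (B 0 ⊗ₖ C c) + A a ⊗ₖ (B 1 ⊗ₖ C c)) =
      Matrix.reindex (bilocAssocEquiv dA dL dR dC) (bilocAssocEquiv dA dL dR dC)
        (A a ⊗ₖ (B 0 ⊗ₖ C c)) +
      Matrix.reindex (bilocAssocEquiv dA dL dR dC) (bilocAssocEquiv dA dL dR dC)
        (A a ⊗ₖ (B 1 ⊗ₖ C c)) from by simp [Matrix.reindex_apply, Matrix.submatrix_add]]
    rw [mul_add, Matrix.trace_add, h a 0 c, h a 1 c]
  have h00 := hfg 0 0
  have h01 := hfg 0 1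
  have h10 := hfg 1 0
  have h11 := hfg 1 1
  norm_num at h00 h01 h10 h11
  have : (1/2 : ℂ) * (1/2) = 0 := by
    calc (1/2 : ℂ) * (1/2) = (f 0 * g 0) * (f 1 * g 1) := by rw [h00, h11]
    _ = (f 0 * g 1) * (f 1 * g 0) := by ring
    _ = 0 := by rcases h01 with h | h <;> simp [h]
  norm_num at this
end

section
/- Let n be a positive integer, let ι and κ be finite index types, let (A_i)_{i∈ι} and (B_j)_{j∈κ} be families of positive semidefinite matrices in M_n(ℂ) such that A_i B_j = B_j A_i for all i ∈ ι and j ∈ κ, and let τ ∈ M_n(ℂ) be positive semidefinite with Tr(τ) = 1. Then there exist positive integers m₁, m₂, families of positive semidefinite matrices (Â_i)_{i∈ι} in M_{m₁}(ℂ) and (B̂_j)_{j∈κ} in M_{m₂}(ℂ), and a positive semidefinite matrix τ̂ indexed by Fin m₁ × Fin m₂ with Tr(τ̂) = 1, such that for every finite list i₁,…,i_k of indices in ι and every finite list j₁,…,j_l of indices in κ: Tr(τ · A_{i₁}⋯A_{i_k} · B_{j₁}⋯B_{j_l}) = Tr(τ̂ · ((Â_{i₁}⋯Â_{i_k}) ⊗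 (B̂_{j₁}⋯B̂_{j_l}))), where ⊗ denotes the Kronecker product. -/
/-!
Keep `Â = A` and `B̂ = B`, and enlarge the two families to commuting star subalgebras `𝒜`, `ℬ`.
On the star subalgebra of `M_n ⊗ M_n` spanned by the `P ⊗ₖ Q` (`P ∈ 𝒜`, `Q ∈ ℬ`), the contraction
`Φ : P ⊗ₖ Q ↦ P Q` is a star homomorphism precisely because `𝒜` and `ℬ` commute, so
`Z ↦ Tr(τ Φ(Z))` is a positive functional there. The trace pairing is nondegenerate on a star
subalgebra of matrices, so this functional is `Z ↦ Tr(τ̂ Z)` for a Hermitian `τ̂` in the subalgebra;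
testing it against the negative part of `τ̂`, which stays in the subalgebra by the functional
calculus, shows `τ̂ ≥ 0`.
-/

open Matrix Kronecker
open scoped ComplexOrder MatrixOrder

namespace Matrix

variable {R m : Type*} [CommSemiring R] [Fintype m]

def contractKronecker : Matrix (m × m) (m × m) R →ₗ[R] Matrix m m R where
  toFun Z := of fun p q => ∑ r, Z (p, r) (r, q)
  map_add' Z W := by ext; simp [Finset.sum_add_distrib]
  map_smul' c Z := by ext; simp [Finset.mul_sum]

theorem contractKronecker_kronecker (P Q : Matrix m m R) :
    contractKronecker (P ⊗ₖ Q) = P * Q := by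
  ext; simp [contractKronecker, mul_apply]

end Matrix

namespace StarSubalgebra

section Commutant

variable {R A : Type*} [CommSemiring R] [StarRing R] [Semiring A] [StarRing A] [Algebra R A]
  [StarModule R A]

theorem exists_subset_forall_commute {s t : Set A} (ht : ∀ b ∈ t, IsSelfAdjoint b)
    (hst : ∀ a ∈ s, ∀ b ∈ t, Commute a b) :
    ∃ 𝒜 ℬ : StarSubalgebra R A, s ⊆ 𝒜 ∧ t ⊆ ℬ ∧ ∀ P ∈ 𝒜, ∀ Q ∈ ℬ, Commute P Q := by
  refine ⟨centralizer R t, centralizer R (centralizer R t : Set A), fun a ha => ?_,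
    fun b hb => ?_, fun P hP Q hQ => ((mem_centralizer_iff R).mp hQ P hP).1⟩
  · refine (mem_centralizer_iff R).mpr fun b hb => ?_
    rw [(ht b hb).star_eq, and_self]
    exact (hst a ha b hb).symm
  · exact (mem_centralizer_iff R).mpr fun P hP =>
      ⟨((mem_centralizer_iff R).mp hP b hb).1.symm,
        ((mem_centralizer_iff R).mp (star_mem hP) b hb).1.symm⟩

end Commutant

section TracePairing

variable {N : Type*} [Fintype N] [DecidableEq N] (S : StarSubalgebra ℂ (Matrix N N ℂ))

instance isClosed_matrix : IsClosed (S : Set (Matrix N N ℂ)) :=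
  S.toSubalgebra.toSubmodule.closed_of_finiteDimensional

instance finiteDimensional_matrix : FiniteDimensional ℂ S :=
  inferInstanceAs (FiniteDimensional ℂ S.toSubalgebra.toSubmodule)

variable {S}

theorem exists_mem_star_mul_self_eq {P : Matrix N N ℂ} (hPS : P ∈ S) (hP : P.PosSemidef) :
    ∃ W ∈ S, star W * W = P := by
  refine ⟨CFC.sqrt P, ?_, ?_⟩
  · rw [CFC.sqrt_eq_real_sqrt P hP.nonneg]
    exact cfcₙ_mem Real.sqrt hPS
  · rw [(CFC.sqrt_nonneg P).isSelfAdjoint.star_eq, CFC.sqrt_mul_sqrt_self P hP.nonneg]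

theorem posSemidef_of_forall_trace_mul_nonneg {T : Matrix N N ℂ} (hTS : T ∈ S)
    (hT : T.IsHermitian) (h : ∀ P ∈ S, P.PosSemidef → 0 ≤ (T * P).trace) : T.PosSemidef := by
  have : IsSelfAdjoint T := hT
  have hneg : T⁻ ∈ S := cfcₙ_mem _ hTS
  have htrace : (T * T⁻).trace = -((T⁻)ᴴ * T⁻).trace := by
    nth_rw 1 [← CFC.posPart_sub_negPart T]
    rw [sub_mul, CFC.posPart_mul_negPart, zero_sub, trace_neg,
      ← star_eq_conjTranspose, (CFC.negPart_nonneg T).isSelfAdjoint.star_eq]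
  have hzero : ((T⁻)ᴴ * T⁻).trace = 0 := by
    have h₁ := h _ hneg (CFC.negPart_nonneg T).posSemidef
    rw [htrace] at h₁
    exact le_antisymm (neg_nonneg.mp h₁) (posSemidef_conjTranspose_mul_self (T⁻)).trace_nonneg
  rw [trace_conjTranspose_mul_self_eq_zero_iff, CFC.negPart_eq_zero_iff T] at hzero
  exact hzero.posSemidef

theorem eq_zero_of_forall_trace_mul_eq_zero {X : Matrix N N ℂ} (hXS : X ∈ S)
    (h : ∀ Z ∈ S, (X * Z).trace = 0) : X = 0 := by
  have h' := h _ (star_mem hXS)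
  rwa [star_eq_conjTranspose, trace_mul_conjTranspose_self_eq_zero_iff] at h'

theorem exists_mem_forall_trace_mul_eq (φ : Matrix N N ℂ →ₗ[ℂ] ℂ) :
    ∃ T ∈ S, ∀ Z ∈ S, (T * Z).trace = φ Z := by
  let ι := S.subtype.toAlgHom.toLinearMap
  let pairing : S →ₗ[ℂ] Module.Dual ℂ S :=
    ((LinearMap.mul ℂ (Matrix N N ℂ)).compl₁₂ ι ι).compr₂ (traceLinearMap N ℂ ℂ)
  have hinj : Function.Injective pairing := by
    refine (injective_iff_map_eq_zero pairing).mpr fun T hT => Subtype.ext ?_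
    exact eq_zero_of_forall_trace_mul_eq_zero T.2 fun Z hZ => LinearMap.congr_fun hT ⟨Z, hZ⟩
  obtain ⟨T, hT⟩ := (LinearMap.injective_iff_surjective_of_finrank_eq_finrank
    Subspace.dual_finrank_eq.symm).mp hinj (φ ∘ₗ ι)
  exact ⟨T, T.2, fun Z hZ => LinearMap.congr_fun hT ⟨Z, hZ⟩⟩

theorem exists_posSemidef_forall_trace_mul_eq (φ : Matrix N N ℂ →ₗ[ℂ] ℂ)
    (hstar : ∀ Z ∈ S, φ (star Z) = star (φ Z))
    (hpos : ∀ Z ∈ S, Z.PosSemidef → 0 ≤ φ Z) :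
    ∃ T : Matrix N N ℂ, T.PosSemidef ∧ ∀ Z ∈ S, (T * Z).trace = φ Z := by
  obtain ⟨T, hTS, hT⟩ := exists_mem_forall_trace_mul_eq φ
  have hherm : T.IsHermitian := by
    refine sub_eq_zero.mp (eq_zero_of_forall_trace_mul_eq_zero (sub_mem (star_mem hTS) hTS)
      fun Z hZ => ?_)
    rw [sub_mul, trace_sub, sub_eq_zero, hT Z hZ]
    calc (star T * Z).trace = star (T * star Z).trace := by
          rw [trace_mul_comm, ← trace_conjTranspose, ← star_eq_conjTranspose, star_mul, star_star]
      _ = φ Z := by rw [hT _ (star_mem hZ), hstar Z hZ, star_star]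
  refine ⟨T, posSemidef_of_forall_trace_mul_nonneg hTS hherm fun P hPS hP => ?_, hT⟩
  exact hT P hPS ▸ hpos P hPS hP

end TracePairing

section Kronecker

variable {m n : Type*} [Fintype m] [Fintype n] [DecidableEq m] [DecidableEq n]

def kronecker (𝒜 : StarSubalgebra ℂ (Matrix m m ℂ)) (ℬ : StarSubalgebra ℂ (Matrix n n ℂ)) :
    StarSubalgebra ℂ (Matrix (m × n) (m × n) ℂ) where
  toSubalgebra := (Submodule.span ℂ (Set.image2 (· ⊗ₖ ·) 𝒜 ℬ)).toSubalgebra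
    (Submodule.subset_span ⟨1, one_mem _, 1, one_mem _, one_kronecker_one⟩) fun x y hx hy => by
      have hxy := Submodule.mul_mem_mul hx hy
      rw [Submodule.span_mul_span] at hxy
      refine Submodule.span_mono ?_ hxy
      rintro _ ⟨_, ⟨P, hP, Q, hQ, rfl⟩, _, ⟨P', hP', Q', hQ', rfl⟩, rfl⟩
      exact ⟨P * P', mul_mem hP hP', Q * Q', mul_mem hQ hQ', mul_kronecker_mul _ _ _ _⟩
  star_mem' {x} hx := by
    induction hx using Submodule.span_induction with
    | mem _ h =>
      obtain ⟨P, hP, Q, hQ, rfl⟩ := h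
      refine Submodule.subset_span ⟨star P, star_mem hP, star Q, star_mem hQ, ?_⟩
      simp [star_eq_conjTranspose, conjTranspose_kronecker]
    | zero => simp
    | add _ _ _ _ h₁ h₂ => simpa using add_mem h₁ h₂
    | smul c _ _ h => simpa using Submodule.smul_mem _ (star c) h

theorem kronecker_mem_kronecker {𝒜 : StarSubalgebra ℂ (Matrix m m ℂ)}
    {ℬ : StarSubalgebra ℂ (Matrix n n ℂ)} {P Q} (hP : P ∈ 𝒜) (hQ : Q ∈ ℬ) :
    P ⊗ₖ Q ∈ 𝒜.kronecker ℬ :=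
  Submodule.subset_span ⟨P, hP, Q, hQ, rfl⟩

end Kronecker

end StarSubalgebra

namespace Matrix

open StarSubalgebra

variable {m : Type*} [Fintype m] [DecidableEq m] {𝒜 ℬ : StarSubalgebra ℂ (Matrix m m ℂ)}

theorem contractKronecker_mul (hcomm : ∀ P ∈ 𝒜, ∀ Q ∈ ℬ, Commute P Q)
    {X Y : Matrix (m × m) (m × m) ℂ} (hX : X ∈ 𝒜.kronecker ℬ) (hY : Y ∈ 𝒜.kronecker ℬ) :
    contractKronecker (X * Y) = contractKronecker X * contractKronecker Y := by
  induction hX, hY using Submodule.span_induction₂ with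
  | mem_mem _ _ hx hy =>
    obtain ⟨P, hP, Q, hQ, rfl⟩ := hx
    obtain ⟨P', hP', Q', hQ', rfl⟩ := hy
    simp only [← mul_kronecker_mul, contractKronecker_kronecker, mul_assoc,
      ← (hcomm P' hP' Q hQ).left_comm Q']
  | zero_left => simp
  | zero_right => simp
  | add_left _ _ _ _ _ _ h₁ h₂ => simp [add_mul, h₁, h₂]
  | add_right _ _ _ _ _ _ h₁ h₂ => simp [mul_add, h₁, h₂]
  | smul_left _ _ _ _ _ h => simp [h]
  | smul_right _ _ _ _ _ h => simp [h]

theorem contractKronecker_star (hcomm : ∀ P ∈ 𝒜, ∀ Q ∈ ℬ, Commute P Q)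
    {X : Matrix (m × m) (m × m) ℂ} (hX : X ∈ 𝒜.kronecker ℬ) :
    contractKronecker (star X) = star (contractKronecker X) := by
  induction hX using Submodule.span_induction with
  | mem _ h =>
    obtain ⟨P, hP, Q, hQ, rfl⟩ := h
    rw [star_eq_conjTranspose, conjTranspose_kronecker, contractKronecker_kronecker,
      contractKronecker_kronecker, (hcomm P hP Q hQ).eq, star_mul]
    rfl
  | zero => simp
  | add _ _ _ _ h₁ h₂ => simp [h₁, h₂]
  | smul _ _ _ h => simp [h]

theorem exists_posSemidef_trace_mul_kronecker_eq (hcomm : ∀ P ∈ 𝒜, ∀ Q ∈ ℬ, Commute P Q)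
    {τ : Matrix m m ℂ} (hτ : τ.PosSemidef) :
    ∃ τ' : Matrix (m × m) (m × m) ℂ, τ'.PosSemidef ∧
      ∀ P ∈ 𝒜, ∀ Q ∈ ℬ, (τ' * (P ⊗ₖ Q)).trace = (τ * P * Q).trace := by
  let φ := traceLinearMap m ℂ ℂ ∘ₗ LinearMap.mulLeft ℂ τ ∘ₗ contractKronecker
  have hφ (Z) : φ Z = (τ * contractKronecker Z).trace := rfl
  obtain ⟨τ', hτ', hτ'φ⟩ := exists_posSemidef_forall_trace_mul_eq (S := 𝒜.kronecker ℬ) φ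
    (fun Z hZ => by
      rw [hφ, hφ, contractKronecker_star hcomm hZ, ← trace_conjTranspose,
        conjTranspose_mul, hτ.isHermitian.eq, trace_mul_comm, star_eq_conjTranspose])
    (fun Z hZ hZpsd => by
      obtain ⟨W, hW, rfl⟩ := exists_mem_star_mul_self_eq hZ hZpsd
      rw [hφ, contractKronecker_mul hcomm (star_mem hW) hW, contractKronecker_star hcomm hW,
        ← mul_assoc, trace_mul_cycle]
      exact (hτ.mul_mul_conjTranspose_same _).trace_nonneg)
  refine ⟨τ', hτ', fun P hP Q hQ => ?_⟩
  rw [hτ'φ _ (kronecker_mem_kronecker hP hQ), hφ, contractKronecker_kronecker, mul_assoc]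

end Matrix

theorem stmt12_general (n : ℕ) (hn : 0 < n) (ι κ : Type*)
    (A : ι → Matrix (Fin n) (Fin n) ℂ) (B : κ → Matrix (Fin n) (Fin n) ℂ)
    (hA : ∀ i, (A i).PosSemidef) (hB : ∀ j, (B j).PosSemidef)
    (hcomm : ∀ i j, A i * B j = B j * A i)
    (τ : Matrix (Fin n) (Fin n) ℂ) (hτ : τ.PosSemidef) (hτtr : τ.trace = 1) :
    ∃ (m₁ m₂ : ℕ), 0 < m₁ ∧ 0 < m₂ ∧
      ∃ (Ahat : ι → Matrix (Fin m₁) (Fin m₁) ℂ) (Bhat : κ → Matrix (Fin m₂) (Fin m₂) ℂ)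
        (τhat : Matrix (Fin m₁ × Fin m₂) (Fin m₁ × Fin m₂) ℂ),
        (∀ i, (Ahat i).PosSemidef) ∧ (∀ j, (Bhat j).PosSemidef) ∧
        τhat.PosSemidef ∧ τhat.trace = 1 ∧
        ∀ (la : List ι) (lb : List κ),
          (τ * (la.map A).prod * (lb.map B).prod).trace =
          (τhat * ((la.map Ahat).prod ⊗ₖ (lb.map Bhat).prod)).trace := by
  obtain ⟨𝒜, ℬ, hA𝒜, hBℬ, h𝒜ℬ⟩ := StarSubalgebra.exists_subset_forall_commute (R := ℂ)
    (s := Set.range A) (t := Set.range B) (by rintro _ ⟨j, rfl⟩; exact (hB j).isHermitian)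
    (by rintro _ ⟨i, rfl⟩ _ ⟨j, rfl⟩; exact hcomm i j)
  obtain ⟨τhat, hτhat, hcorr⟩ := exists_posSemidef_trace_mul_kronecker_eq h𝒜ℬ hτ
  refine ⟨n, n, hn, hn, A, B, τhat, hA, hB, hτhat, ?_, fun la lb => (hcorr _ ?_ _ ?_).symm⟩
  · simpa [one_kronecker_one, hτtr] using hcorr 1 (one_mem _) 1 (one_mem _)
  · exact list_prod_mem (by simpa using fun i _ => hA𝒜 ⟨i, rfl⟩)
  · exact list_prod_mem (by simpa using fun j _ => hBℬ ⟨j, rfl⟩)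

/-- Finite-dimensional Tsirelson theorem: two commuting finite families of positive
semidefinite matrices together with a state `τ` can be realised on a tensor product of two
finite-dimensional spaces, with a state `τ̂` reproducing all mixed correlation functions. -/
theorem stmt12 (n : ℕ) (hn : 0 < n) (ι κ : Type*) [Fintype ι] [Fintype κ]
    (A : ι → Matrix (Fin n) (Fin n) ℂ) (B : κ → Matrix (Fin n) (Fin n) ℂ)
    (hA : ∀ i, (A i).PosSemidef) (hB : ∀ j, (B j).PosSemidef)
    (hcomm : ∀ i j, A i * B j = B j * A i)
    (τ : Matrix (Fin n) (Fin n) ℂ) (hτ : τ.PosSemidef) (hτtr : τ.trace = 1) :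
    ∃ (m₁ m₂ : ℕ), 0 < m₁ ∧ 0 < m₂ ∧
      ∃ (Ahat : ι → Matrix (Fin m₁) (Fin m₁) ℂ) (Bhat : κ → Matrix (Fin m₂) (Fin m₂) ℂ)
        (τhat : Matrix (Fin m₁ × Fin m₂) (Fin m₁ × Fin m₂) ℂ),
        (∀ i, (Ahat i).PosSemidef) ∧ (∀ j, (Bhat j).PosSemidef) ∧
        τhat.PosSemidef ∧ τhat.trace = 1 ∧
        ∀ (la : List ι) (lb : List κ),
          (τ * (la.map A).prod * (lb.map B).prod).trace =
          (τhat * ((la.map Ahat).prod ⊗ₖ (lb.map Bhat).prod)).trace :=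
  stmt12_general n hn ι κ A B hA hB hcomm τ hτ hτtr
end

section
/- Let n be a positive integer and let X, Y, Z, A, B, C be finite types. Consider a mixed-state commutator bilocal quantum model in M_n(ℂ): positive semidefinite ρ, σ ∈ M_n(ℂ) with ρσ = σρ and, setting τ := ρσ, Tr(τ) = 1; PVMs (A_{a|x})_{a∈A}, (B_{b|y})_{b∈B}, (C_{c|z})_{c∈C} in M_n(ℂ) such that every A_{a|x} commutes with every B_{b|y} and every C_{c|z}, every B_{b|y} commutes with every C_{c|z}, and A_{a|x}σ = σA_{a|x}, ρC_{c|z} = C_{c|z}ρ for all indices. Assume the factorisation constraints: for every finite list L of pairs (a,x) ∈ A × X and every finite list M of pairs (c,z) ∈ C × Z, Tr(τ · ∏_{(a,x)∈L} A_{a|x} · ∏_{(c,z)∈M} C_{c|z}) = Tr(τ · ∏_{(a,x)∈L} A_{a|x}) · Tr(τ · ∏_{(c,z)∈M} C_{c|z}). Then τ is c-purifiable: there exist a positive integer m, Hermitian idempotents ρ', σ' ∈ M_m(ℂ) with ρ'σ' = σ'ρ' and, setting τ' := ρ'σ', Tr(τ') = 1, and PVMs (A'_{a|x}), (B'_{b|y}),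 (C'_{c|z}) in M_m(ℂ) satisfying the same pairwise commutation conditions across parties and A'_{a|x}σ' = σ'A'_{a|x}, ρ'C'_{c|z} = C'_{c|z}ρ' for all indices, such that Tr(τ' · A'_{a|x} · B'_{b|y} · C'_{c|z}) = Tr(τ · A_{a|x} · B_{b|y} · C_{c|z}) for all a, b, c, x, y, z. -/
/-!
Purify by the GNS construction. Since `ρ` and `σ` are commuting and positive, `τ = ρσ = w wᴴ`
for some `w`, so on `M_n` with the Hilbert–Schmidt inner product the vector `Ω = w` satisfies
`⟪Ω, M Ω⟫ = Tr (τ M)` for left multiplication by `M`. Let `σ'` and `ρ'` project onto the spans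
of the vectors `(Alice word) Ω` and `(Charlie word) Ω`. The factorisation constraints say exactly
that `⟪c Ω, a Ω⟫ = ⟪c Ω, Ω⟫ ⟪Ω, a Ω⟫` for such vectors, which forces `ρ'σ' = σ'ρ' = |Ω⟩⟨Ω|`,
so that `Tr (ρ'σ' T) = ⟪Ω, T Ω⟫` reproduces the distribution. Alice's self-adjoint operators
leave her subspace invariant, hence commute with `σ'`; likewise Charlie's with `ρ'`. All
operators act on the `n²`-dimensional space `M_n`, which gives the matrices of the purification.
-/

open Matrix
open scoped ComplexOrder

open InnerProductSpace ContinuousLinearMap WithLp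
open scoped Kronecker

section Hilbert

variable {𝕜 E : Type*} [RCLike 𝕜] [NormedAddCommGroup E] [InnerProductSpace 𝕜 E]

theorem starProjection_span_apply_of_inner_eq_mul {s t : Set E} {Ω : E}
    [(Submodule.span 𝕜 t).HasOrthogonalProjection] (hΩ : Ω ∈ Submodule.span 𝕜 t)
    (h : ∀ u ∈ s, ∀ v ∈ t, inner 𝕜 v u = inner 𝕜 v Ω * inner 𝕜 Ω u)
    {u : E} (hu : u ∈ Submodule.span 𝕜 s) :
    (Submodule.span 𝕜 t).starProjection u = inner 𝕜 Ω u • Ω := by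
  let f : E →ₗ[𝕜] E := LinearMap.id - (rankOne 𝕜 Ω Ω : E →ₗ[𝕜] E)
  have hf (x : E) : f x = x - inner 𝕜 Ω x • Ω := rfl
  have hortho : Submodule.span 𝕜 (f '' s) ⟂ Submodule.span 𝕜 t := by
    refine Submodule.isOrtho_span.2 ?_
    rintro _ ⟨u, hu, rfl⟩ v hv
    rw [← inner_conj_symm, hf, inner_sub_right, inner_smul_right, h u hu v hv, mul_comm,
      sub_self, map_zero]
  refine Submodule.eq_starProjection_of_mem_orthogonal (Submodule.smul_mem _ _ hΩ) ?_
  exact hortho.le (Submodule.apply_mem_span_image_of_mem_span f hu)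

theorem starProjection_span_mul_starProjection_span_of_inner_eq_mul {s t : Set E} {Ω : E}
    [(Submodule.span 𝕜 s).HasOrthogonalProjection] [(Submodule.span 𝕜 t).HasOrthogonalProjection]
    (hΩs : Ω ∈ Submodule.span 𝕜 s) (hΩt : Ω ∈ Submodule.span 𝕜 t)
    (h : ∀ u ∈ s, ∀ v ∈ t, inner 𝕜 v u = inner 𝕜 v Ω * inner 𝕜 Ω u) :
    (Submodule.span 𝕜 t).starProjection * (Submodule.span 𝕜 s).starProjection =
      rankOne 𝕜 Ω Ω := by
  ext x
  rw [mul_apply_eq_comp, starProjection_span_apply_of_inner_eq_mul hΩt h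
    ((Submodule.span 𝕜 s).starProjection_apply_mem x),
    ← Submodule.inner_starProjection_left_eq_right, Submodule.starProjection_eq_self_iff.2 hΩs,
    rankOne_apply]

theorem commute_starProjection_of_mem_invtSubmodule [CompleteSpace E] {T : E →L[𝕜] E}
    (hT : IsSelfAdjoint T) {K : Submodule 𝕜 E} [K.HasOrthogonalProjection]
    (hK : K ∈ Module.End.invtSubmodule (T : E →ₗ[𝕜] E)) : Commute T K.starProjection := by
  have hKperp : Kᗮ ∈ Module.End.invtSubmodule (T : E →ₗ[𝕜] E) :=
    orthogonal_mem_invtSubmodule (by rwa [← star_eq_adjoint, hT.star_eq])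
  ext x
  refine (K.eq_starProjection_of_mem_orthogonal (hK (K.starProjection_apply_mem x)) ?_).symm
  rw [← map_sub]
  exact hKperp (K.sub_starProjection_mem_orthogonal x)

variable {ι κ : Type*}

def cyclicSubspace (T : ι → E →L[𝕜] E) (Ω : E) : Submodule 𝕜 E :=
  Submodule.span 𝕜 (Set.range fun L : List ι => (L.map T).prod Ω)

theorem self_mem_cyclicSubspace (T : ι → E →L[𝕜] E) (Ω : E) : Ω ∈ cyclicSubspace T Ω :=
  Submodule.subset_span ⟨[], by simp⟩

theorem cyclicSubspace_mem_invtSubmodule (T : ι → E →L[𝕜] E) (Ω : E) (i : ι) :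
    cyclicSubspace T Ω ∈ Module.End.invtSubmodule (T i : E →ₗ[𝕜] E) := by
  refine (Module.End.mem_invtSubmodule _).2 (Submodule.span_le.2 ?_)
  rintro _ ⟨L, rfl⟩
  exact Submodule.subset_span ⟨i :: L, by simp⟩

theorem exists_starProjections_of_inner_eq_mul [CompleteSpace E] [FiniteDimensional 𝕜 E]
    {a : ι → E →L[𝕜] E} {c : κ → E →L[𝕜] E} (ha : ∀ i, IsSelfAdjoint (a i))
    (hc : ∀ j, IsSelfAdjoint (c j)) {Ω : E}
    (h : ∀ (L : List ι) (M : List κ), inner 𝕜 ((M.map c).prod Ω) ((L.map a).prod Ω) =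
      inner 𝕜 ((M.map c).prod Ω) Ω * inner 𝕜 Ω ((L.map a).prod Ω)) :
    ∃ P Q : E →L[𝕜] E, IsStarProjection P ∧ IsStarProjection Q ∧
      P * Q = rankOne 𝕜 Ω Ω ∧ Q * P = rankOne 𝕜 Ω Ω ∧
      (∀ i, Commute (a i) Q) ∧ ∀ j, Commute (c j) P := by
  have hPQ := starProjection_span_mul_starProjection_span_of_inner_eq_mul
    (self_mem_cyclicSubspace a Ω) (self_mem_cyclicSubspace c Ω) (by
      rintro _ ⟨L, rfl⟩ _ ⟨M, rfl⟩
      exact h L M)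
  refine ⟨(cyclicSubspace c Ω).starProjection, (cyclicSubspace a Ω).starProjection,
    isStarProjection_starProjection, isStarProjection_starProjection, hPQ, ?_,
    fun i => commute_starProjection_of_mem_invtSubmodule (ha i)
      (cyclicSubspace_mem_invtSubmodule a Ω i),
    fun j => commute_starProjection_of_mem_invtSubmodule (hc j)
      (cyclicSubspace_mem_invtSubmodule c Ω j)⟩
  have hQP := congrArg star hPQ
  rwa [star_mul, (isSelfAdjoint_starProjection _).star_eq, (isSelfAdjoint_starProjection _).star_eq,
    star_eq_adjoint, adjoint_rankOne] at hQP

theorem trace_rankOne_self_mul [CompleteSpace E] [FiniteDimensional 𝕜 E] (Ω : E)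
    (T : E →L[𝕜] E) :
    LinearMap.trace 𝕜 E (rankOne 𝕜 Ω Ω * T : E →L[𝕜] E) = inner 𝕜 Ω (T Ω) := by
  rw [mul_def, rankOne_comp, trace_rankOne, adjoint_inner_left]

variable (𝕜 E) in
noncomputable def toMatrixStd [CompleteSpace E] [FiniteDimensional 𝕜 E] :
    (E →L[𝕜] E) ≃⋆ₐ[𝕜] Matrix (Fin (Module.finrank 𝕜 E)) (Fin (Module.finrank 𝕜 E)) 𝕜 :=
  (stdOrthonormalBasis 𝕜 E).repr.conjStarAlgEquiv.trans toEuclideanCLM.symm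

theorem trace_toMatrixStd [CompleteSpace E] [FiniteDimensional 𝕜 E] (T : E →L[𝕜] E) :
    (toMatrixStd 𝕜 E T).trace = LinearMap.trace 𝕜 E T := by
  set e := (stdOrthonormalBasis 𝕜 E).repr
  have hT : (toEuclideanLin (toMatrixStd 𝕜 E T) : _ →ₗ[𝕜] _) =
      e.toLinearEquiv.conj (T : E →ₗ[𝕜] E) := by
    rw [← coe_toEuclideanCLM_eq_toEuclideanLin, toMatrixStd, StarAlgEquiv.trans_apply,
      StarAlgEquiv.apply_symm_apply]
    ext; simp [LinearEquiv.conj_apply, e]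
  rw [← LinearMap.trace_conj' (T : E →ₗ[𝕜] E) e.toLinearEquiv, ← hT,
    toEuclideanLin_eq_toLin_orthonormal, trace_toLin_eq]

end Hilbert

namespace Matrix

variable {R ι : Type*} [Fintype ι] [DecidableEq ι]

variable (R ι) in
def oneKroneckerStarAlgHom [CommSemiring R] [StarRing R] :
    Matrix ι ι R →⋆ₐ[R] Matrix (ι × ι) (ι × ι) R where
  toFun M := 1 ⊗ₖ M
  map_one' := one_kronecker_one
  map_mul' M N := by rw [← mul_kronecker_mul, one_mul]
  map_zero' := kronecker_zero _
  map_add' := kronecker_add _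
  commutes' r := by simp [Algebra.algebraMap_eq_smul_one, kronecker_smul]
  map_star' M := by simp [star_eq_conjTranspose, conjTranspose_kronecker]

theorem trace_mul_conjTranspose_prod_mul_prod [CommRing R] [StarRing R] {α β : Type*}
    (τ : Matrix ι ι R) (a : α → Matrix ι ι R) (c : β → Matrix ι ι R)
    (hc : ∀ j, (c j)ᴴ = c j) (hac : ∀ i j, a i * c j = c j * a i)
    (hfact : ∀ (L : List α) (M : List β),
      (τ * (L.map a).prod * (M.map c).prod).trace =
        (τ * (L.map a).prod).trace * (τ * (M.map c).prod).trace)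
    (L : List α) (M : List β) :
    (τ * (((M.map c).prod)ᴴ * (L.map a).prod)).trace =
      (τ * ((M.map c).prod)ᴴ).trace * (τ * (L.map a).prod).trace := by
  have hM : ((M.map c).prod)ᴴ = (M.reverse.map c).prod := by
    simp [conjTranspose_list_prod, Function.comp_def, hc]
  have hcomm : Commute (L.map a).prod (M.reverse.map c).prod :=
    Commute.list_prod_left _ _ fun _ hx => Commute.list_prod_right _ _ fun _ hy => by
      obtain ⟨i, -, rfl⟩ := List.mem_map.1 hx
      obtain ⟨j, -, rfl⟩ := List.mem_map.1 hy
      exact hac i j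
  rw [hM, ← hcomm.eq, ← mul_assoc, hfact, mul_comm]

open scoped MatrixOrder Matrix.Norms.L2Operator in
theorem PosSemidef.exists_mul_conjTranspose_eq_mul {ρ σ : Matrix ι ι ℂ} (hρ : ρ.PosSemidef)
    (hσ : σ.PosSemidef) (h : Commute ρ σ) : ∃ w : Matrix ι ι ℂ, w * wᴴ = ρ * σ := by
  obtain ⟨w, hw⟩ := CStarAlgebra.nonneg_iff_eq_mul_star_self.1 (h.mul_nonneg hρ.nonneg hσ.nonneg)
  exact ⟨w, hw.symm⟩

end Matrix

section LeftRegular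

variable {𝕜 ι : Type*} [RCLike 𝕜] [Fintype ι]

noncomputable def euclideanVec (X : Matrix ι ι 𝕜) : EuclideanSpace 𝕜 (ι × ι) :=
  toLp 2 (vec X)

theorem inner_euclideanVec (X Y : Matrix ι ι 𝕜) :
    inner 𝕜 (euclideanVec X) (euclideanVec Y) = (Xᴴ * Y).trace := by
  rw [euclideanVec, euclideanVec, EuclideanSpace.inner_eq_star_dotProduct, dotProduct_comm]
  exact star_vec_dotProduct_vec X Y

variable [DecidableEq ι]

variable (𝕜 ι) in
/-- Left multiplication on `euclideanVec`, since `vec (M * X) = (1 ⊗ₖ M) *ᵥ vec X`. -/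
noncomputable def leftRegular :
    Matrix ι ι 𝕜 →⋆ₐ[𝕜] (EuclideanSpace 𝕜 (ι × ι) →L[𝕜] EuclideanSpace 𝕜 (ι × ι)) :=
  (toEuclideanCLM : Matrix (ι × ι) (ι × ι) 𝕜 ≃⋆ₐ[𝕜] _).toStarAlgHom.comp
    (oneKroneckerStarAlgHom 𝕜 ι)

theorem leftRegular_euclideanVec (M X : Matrix ι ι 𝕜) :
    leftRegular 𝕜 ι M (euclideanVec X) = euclideanVec (M * X) := by
  simp [leftRegular, oneKroneckerStarAlgHom, euclideanVec, vec_mul_eq_mulVec]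

theorem inner_leftRegular_euclideanVec (P Q w : Matrix ι ι 𝕜) :
    inner 𝕜 (leftRegular 𝕜 ι P (euclideanVec w)) (leftRegular 𝕜 ι Q (euclideanVec w)) =
      (w * wᴴ * (Pᴴ * Q)).trace := by
  rw [leftRegular_euclideanVec, leftRegular_euclideanVec, inner_euclideanVec, conjTranspose_mul,
    ← trace_mul_cycle', trace_mul_comm]
  simp only [mul_assoc]

theorem inner_prod_leftRegular_euclideanVec_eq_mul {α β : Type*} {w : Matrix ι ι 𝕜}
    {a : α → Matrix ι ι 𝕜} {c : β → Matrix ι ι 𝕜}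
    (hc : ∀ j, (c j)ᴴ = c j) (hac : ∀ i j, a i * c j = c j * a i)
    (hfact : ∀ (L : List α) (M : List β),
      (w * wᴴ * (L.map a).prod * (M.map c).prod).trace =
        (w * wᴴ * (L.map a).prod).trace * (w * wᴴ * (M.map c).prod).trace)
    (L : List α) (M : List β) :
    inner 𝕜 ((M.map (leftRegular 𝕜 ι ∘ c)).prod (euclideanVec w))
        ((L.map (leftRegular 𝕜 ι ∘ a)).prod (euclideanVec w)) =
      inner 𝕜 ((M.map (leftRegular 𝕜 ι ∘ c)).prod (euclideanVec w)) (euclideanVec w) *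
        inner 𝕜 (euclideanVec w) ((L.map (leftRegular 𝕜 ι ∘ a)).prod (euclideanVec w)) := by
  have hleft (P : Matrix ι ι 𝕜) :
      inner 𝕜 (leftRegular 𝕜 ι P (euclideanVec w)) (euclideanVec w) = (w * wᴴ * Pᴴ).trace := by
    simpa using inner_leftRegular_euclideanVec P 1 w
  have hright (Q : Matrix ι ι 𝕜) :
      inner 𝕜 (euclideanVec w) (leftRegular 𝕜 ι Q (euclideanVec w)) = (w * wᴴ * Q).trace := by
    simpa using inner_leftRegular_euclideanVec 1 Q w
  simp only [← List.map_map, ← map_list_prod]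
  rw [inner_leftRegular_euclideanVec, hleft, hright]
  exact trace_mul_conjTranspose_prod_mul_prod _ a c hc hac hfact L M

end LeftRegular

theorem stmt14_general (n : ℕ)
    (X Y Z A B C : Type*)
    [Fintype A] [Fintype B] [Fintype C]
    (ρ σ : Matrix (Fin n) (Fin n) ℂ)
    (MA : X → A → Matrix (Fin n) (Fin n) ℂ)
    (MB : Y → B → Matrix (Fin n) (Fin n) ℂ)
    (MC : Z → C → Matrix (Fin n) (Fin n) ℂ)
    (hρ : ρ.PosSemidef) (hσ : σ.PosSemidef) (hρσ : ρ * σ = σ * ρ)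
    (htr : (ρ * σ).trace = 1)
    (hApvm : ∀ x a, (MA x a)ᴴ = MA x a ∧ MA x a * MA x a = MA x a)
    (hAsum : ∀ x, ∑ a, MA x a = 1)
    (hBpvm : ∀ y b, (MB y b)ᴴ = MB y b ∧ MB y b * MB y b = MB y b)
    (hBsum : ∀ y, ∑ b, MB y b = 1)
    (hCpvm : ∀ z c, (MC z c)ᴴ = MC z c ∧ MC z c * MC z c = MC z c)
    (hCsum : ∀ z, ∑ c, MC z c = 1)
    (hAB : ∀ x a y b, MA x a * MB y b = MB y b * MA x a)
    (hAC : ∀ x a z c, MA x a * MC z c = MC z c * MA x a)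
    (hBC : ∀ y b z c, MB y b * MC z c = MC z c * MB y b)
    (hfact : ∀ (L : List (A × X)) (M : List (C × Z)),
      (ρ * σ * (L.map fun p => MA p.2 p.1).prod * (M.map fun p => MC p.2 p.1).prod).trace =
      (ρ * σ * (L.map fun p => MA p.2 p.1).prod).trace *
      (ρ * σ * (M.map fun p => MC p.2 p.1).prod).trace) :
    ∃ (m : ℕ), 0 < m ∧
      ∃ (ρ' σ' : Matrix (Fin m) (Fin m) ℂ)
        (MA' : X → A → Matrix (Fin m) (Fin m) ℂ)
        (MB' : Y → B → Matrix (Fin m) (Fin m) ℂ)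
        (MC' : Z → C → Matrix (Fin m) (Fin m) ℂ),
        ρ'ᴴ = ρ' ∧ ρ' * ρ' = ρ' ∧ σ'ᴴ = σ' ∧ σ' * σ' = σ' ∧
        ρ' * σ' = σ' * ρ' ∧ (ρ' * σ').trace = 1 ∧
        (∀ x a, (MA' x a)ᴴ = MA' x a ∧ MA' x a * MA' x a = MA' x a) ∧
        (∀ x, ∑ a, MA' x a = 1) ∧
        (∀ y b, (MB' y b)ᴴ = MB' y b ∧ MB' y b * MB' y b = MB' y b) ∧
        (∀ y, ∑ b, MB' y b = 1) ∧
        (∀ z c, (MC' z c)ᴴ = MC' z c ∧ MC' z c * MC' z c = MC' z c) ∧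
        (∀ z, ∑ c, MC' z c = 1) ∧
        (∀ x a y b, MA' x a * MB' y b = MB' y b * MA' x a) ∧
        (∀ x a z c, MA' x a * MC' z c = MC' z c * MA' x a) ∧
        (∀ y b z c, MB' y b * MC' z c = MC' z c * MB' y b) ∧
        (∀ x a, MA' x a * σ' = σ' * MA' x a) ∧
        (∀ z c, ρ' * MC' z c = MC' z c * ρ') ∧
        (∀ x y z a b c,
          (ρ' * σ' * (MA' x a * MB' y b * MC' z c)).trace =
          (ρ * σ * (MA x a * MB y b * MC z c)).trace) := by
  obtain ⟨w, hw⟩ := hρ.exists_mul_conjTranspose_eq_mul hσ hρσ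
  simp only [← hw] at htr hfact ⊢
  set π := leftRegular ℂ (Fin n)
  set Ω := euclideanVec w
  obtain ⟨P, Q, hP, hQ, hPQ, hQP, hAQ, hCP⟩ := exists_starProjections_of_inner_eq_mul
    (a := fun p : A × X => π (MA p.2 p.1)) (c := fun p : C × Z => π (MC p.2 p.1))
    (fun p => IsSelfAdjoint.map (hApvm p.2 p.1).1 π)
    (fun p => IsSelfAdjoint.map (hCpvm p.2 p.1).1 π)
    (inner_prod_leftRegular_euclideanVec_eq_mul (fun p => (hCpvm p.2 p.1).1)
      (fun p q => hAC p.2 p.1 q.2 q.1) hfact)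
  set Θ := toMatrixStd ℂ (EuclideanSpace ℂ (Fin n × Fin n))
  have hstate (T : Matrix (Fin n) (Fin n) ℂ) :
      (Θ P * Θ Q * Θ (π T)).trace = (w * wᴴ * T).trace := by
    rw [← map_mul, ← map_mul, trace_toMatrixStd, hPQ, trace_rankOne_self_mul]
    simpa [π, Ω] using inner_leftRegular_euclideanVec 1 T w
  have hproj {p : Matrix (Fin n) (Fin n) ℂ} (hp : pᴴ = p ∧ p * p = p) :
      (Θ (π p))ᴴ = Θ (π p) ∧ Θ (π p) * Θ (π p) = Θ (π p) :=
    ⟨(IsSelfAdjoint.map hp.1 π).map Θ, by rw [← map_mul, ← map_mul, hp.2]⟩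
  have hcomm {p q : Matrix (Fin n) (Fin n) ℂ} (h : p * q = q * p) :
      Θ (π p) * Θ (π q) = Θ (π q) * Θ (π p) :=
    ((Commute.map h π).map Θ).eq
  refine ⟨_, Module.finrank_pos_iff_exists_ne_zero.2 ⟨Ω, ?_⟩, Θ P, Θ Q,
    fun x a => Θ (π (MA x a)), fun y b => Θ (π (MB y b)), fun z c => Θ (π (MC z c)),
    hP.isSelfAdjoint.map Θ, hP.isIdempotentElem.map Θ, hQ.isSelfAdjoint.map Θ,
    hQ.isIdempotentElem.map Θ, by rw [← map_mul, ← map_mul, hPQ, hQP], ?_,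
    fun x a => hproj (hApvm x a), fun x => by simp only [← map_sum, hAsum x, map_one],
    fun y b => hproj (hBpvm y b), fun y => by simp only [← map_sum, hBsum y, map_one],
    fun z c => hproj (hCpvm z c), fun z => by simp only [← map_sum, hCsum z, map_one],
    fun x a y b => hcomm (hAB x a y b), fun x a z c => hcomm (hAC x a z c),
    fun y b z c => hcomm (hBC y b z c),
    fun x a => ((hAQ (a, x)).map Θ).eq, fun z c => ((hCP (c, z)).map Θ).eq.symm,
    fun x y z a b c => by simpa only [map_mul] using hstate (MA x a * MB y b * MC z c)⟩
  · intro hΩ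
    rw [vec_eq_zero_iff.1 (congrArg ofLp hΩ)] at htr
    simp at htr
  · simpa [htr] using hstate 1

/-- C-purifiability (finite-dimensional Corollary E.1): a mixed-state commutator bilocal
quantum model whose Alice–Charlie factorisation constraints all hold admits a pure-state
commutator bilocal model (a c-purification) reproducing the same distribution. -/
theorem stmt14 (n : ℕ) (hn : 0 < n)
    (X Y Z A B C : Type*) [Fintype X] [Fintype Y] [Fintype Z]
    [Fintype A] [Fintype B] [Fintype C]
    (ρ σ : Matrix (Fin n) (Fin n) ℂ)
    (MA : X → A → Matrix (Fin n) (Fin n) ℂ)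
    (MB : Y → B → Matrix (Fin n) (Fin n) ℂ)
    (MC : Z → C → Matrix (Fin n) (Fin n) ℂ)
    (hρ : ρ.PosSemidef) (hσ : σ.PosSemidef) (hρσ : ρ * σ = σ * ρ)
    (htr : (ρ * σ).trace = 1)
    (hApvm : ∀ x a, (MA x a)ᴴ = MA x a ∧ MA x a * MA x a = MA x a)
    (hAsum : ∀ x, ∑ a, MA x a = 1)
    (hBpvm : ∀ y b, (MB y b)ᴴ = MB y b ∧ MB y b * MB y b = MB y b)
    (hBsum : ∀ y, ∑ b, MB y b = 1)
    (hCpvm : ∀ z c, (MC z c)ᴴ = MC z c ∧ MC z c * MC z c = MC z c)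
    (hCsum : ∀ z, ∑ c, MC z c = 1)
    (hAB : ∀ x a y b, MA x a * MB y b = MB y b * MA x a)
    (hAC : ∀ x a z c, MA x a * MC z c = MC z c * MA x a)
    (hBC : ∀ y b z c, MB y b * MC z c = MC z c * MB y b)
    (hAσ : ∀ x a, MA x a * σ = σ * MA x a)
    (hρC : ∀ z c, ρ * MC z c = MC z c * ρ)
    (hfact : ∀ (L : List (A × X)) (M : List (C × Z)),
      (ρ * σ * (L.map fun p => MA p.2 p.1).prod * (M.map fun p => MC p.2 p.1).prod).trace =
      (ρ * σ * (L.map fun p => MA p.2 p.1).prod).trace *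
      (ρ * σ * (M.map fun p => MC p.2 p.1).prod).trace) :
    ∃ (m : ℕ), 0 < m ∧
      ∃ (ρ' σ' : Matrix (Fin m) (Fin m) ℂ)
        (MA' : X → A → Matrix (Fin m) (Fin m) ℂ)
        (MB' : Y → B → Matrix (Fin m) (Fin m) ℂ)
        (MC' : Z → C → Matrix (Fin m) (Fin m) ℂ),
        ρ'ᴴ = ρ' ∧ ρ' * ρ' = ρ' ∧ σ'ᴴ = σ' ∧ σ' * σ' = σ' ∧
        ρ' * σ' = σ' * ρ' ∧ (ρ' * σ').trace = 1 ∧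
        (∀ x a, (MA' x a)ᴴ = MA' x a ∧ MA' x a * MA' x a = MA' x a) ∧
        (∀ x, ∑ a, MA' x a = 1) ∧
        (∀ y b, (MB' y b)ᴴ = MB' y b ∧ MB' y b * MB' y b = MB' y b) ∧
        (∀ y, ∑ b, MB' y b = 1) ∧
        (∀ z c, (MC' z c)ᴴ = MC' z c ∧ MC' z c * MC' z c = MC' z c) ∧
        (∀ z, ∑ c, MC' z c = 1) ∧
        (∀ x a y b, MA' x a * MB' y b = MB' y b * MA' x a) ∧
        (∀ x a z c, MA' x a * MC' z c = MC' z c * MA' x a) ∧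
        (∀ y b z c, MB' y b * MC' z c = MC' z c * MB' y b) ∧
        (∀ x a, MA' x a * σ' = σ' * MA' x a) ∧
        (∀ z c, ρ' * MC' z c = MC' z c * ρ') ∧
        (∀ x y z a b c,
          (ρ' * σ' * (MA' x a * MB' y b * MC' z c)).trace =
          (ρ * σ * (MA x a * MB y b * MC z c)).trace) :=
  stmt14_general n X Y Z A B C ρ σ MA MB MC hρ hσ hρσ htr hApvm hAsum hBpvm hBsum hCpvm hCsum hAB
    hAC hBC hfact
end
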